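/- Suppose a randomized training mechanism satisfies ε-DP: for all θ and all datasets D, D' differing in one sample, log( p(θ|D)/p(θ|D') ) ≤ ε. Then the Bayes posterior membership probability satisfies P(m_v=1 | θ, D) ≤ σ(ε + log(λ/(1-λ))), where λ ∈ (0,1) is the prior membership probability and σ is the sigmoid. -/

import Mathlib

/-- The logistic sigmoid. -/
noncomputable def sigmoid (x : ℝ) : ℝ := 1 / (1 + Real.exp (-x))

lemma sigmoid_eq_real_sigmoid : sigmoid = Real.sigmoid :=
  funext fun _ => one_div _

lemma sigmoid_monotone : Monotone sigmoid :=
  sigmoid_eq_real_sigmoid ▸ Real.sigmoid_strictMono.monotone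

theorem stmt_4_general {Θ D C : Type*} [Fintype C] (p : Θ → D → ℝ) (adj : D → D → Prop)
    (ε : ℝ)
    (hDP : ∀ (θ : Θ) (d d' : D), adj d d' → Real.log (p θ d / p θ d') ≤ ε)
    (lam : ℝ)
    (w : C → ℝ) (hw : ∀ c, 0 ≤ w c) (hw1 : ∑ c, w c = 1)
    (Din Dout : C → D) (hadj : ∀ c, adj (Din c) (Dout c)) (θ : Θ) :
    ∑ c, w c *
        sigmoid (Real.log (p θ (Din c) / p θ (Dout c)) + Real.log (lam / (1 - lam)))
      ≤ sigmoid (ε + Real.log (lam / (1 - lam))) :=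
  calc ∑ c, w c * sigmoid (Real.log (p θ (Din c) / p θ (Dout c)) + Real.log (lam / (1 - lam)))
      ≤ ∑ c, w c * sigmoid (ε + Real.log (lam / (1 - lam))) :=
        Finset.sum_le_sum fun c _ => mul_le_mul_of_nonneg_left
          (sigmoid_monotone (add_le_add_left (hDP θ _ _ (hadj c)) _)) (hw c)
    _ = sigmoid (ε + Real.log (lam / (1 - lam))) := by rw [← Finset.sum_mul, hw1, one_mul]

/-- If the training mechanism satisfies ε-DP, i.e. for all models `θ` and
all datasets `d, d'` differing in one sample (`adj d d'`) the densities satisfy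
`log (p θ d / p θ d') ≤ ε`, then the Bayes posterior membership probability —
an expectation over membership configurations `c` (with weights `w` summing to 1) of
`σ(log-likelihood-ratio + log(λ/(1-λ)))` — is at most `σ(ε + log(λ/(1-λ)))`. -/
theorem stmt_4 {Θ D C : Type*} [Fintype C] (p : Θ → D → ℝ) (adj : D → D → Prop)
    (hp : ∀ θ d, 0 < p θ d) (ε : ℝ)
    (hDP : ∀ (θ : Θ) (d d' : D), adj d d' → Real.log (p θ d / p θ d') ≤ ε)
    (lam : ℝ) (hlam : lam ∈ Set.Ioo (0:ℝ) 1)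
    (w : C → ℝ) (hw : ∀ c, 0 ≤ w c) (hw1 : ∑ c, w c = 1)
    (Din Dout : C → D) (hadj : ∀ c, adj (Din c) (Dout c)) (θ : Θ) :
    ∑ c, w c *
        sigmoid (Real.log (p θ (Din c) / p θ (Dout c)) + Real.log (lam / (1 - lam)))
      ≤ sigmoid (ε + Real.log (lam / (1 - lam))) :=
  stmt_4_general p adj ε hDP lam w hw hw1 Din Dout hadj θ
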